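/- Explicit five-dimensional counterexample. On ℝ⁵ with the Euclidean metric, let W_{abcd} be the tensor field whose only nonvanishing components are those determined from W_{1234} = W_{1324} = sin(x₅) by the symmetries W_{abcd} = −W_{bacd} = −W_{abdc} = W_{cdab}. Then W is a Weyl candidate (it satisfies W_{abcd} = W_{[ab]cd} = W_{ab[cd]}, W_{abcd} = W_{cdab}, W_{a[bcd]} = 0 and W^a_{bad} = 0), but it fails constraint (10): the (a,b;c,d;e) = (1,2;3,4;5) component of the left-hand side of (10) is a nonzero constant multiple of cos(x₅), which is not identically zero. -/

import Mathlib

open scoped ContDiff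

noncomputable section

/-- Partial derivative `∂ᵢ f` of a scalar field on flat `ℝⁿ` (points represented as
`Fin n → ℝ`, standard coordinates) in the `i`-th coordinate direction.  In Cartesian
coordinates on flat space this is the covariant derivative `;i`. -/
def pd {n : ℕ} (i : Fin n) (f : (Fin n → ℝ) → ℝ) : (Fin n → ℝ) → ℝ :=
  fun x => fderiv ℝ f x (Pi.single i 1)

/-- Components `η_{ab}` of the constant diagonal metric with diagonal entries `η a = ±1`;
since the entries are `±1` these coincide with the components `η^{ab}` of the inverse
metric. -/
def gm {n : ℕ} (η : Fin n → ℝ) (a b : Fin n) : ℝ := if a = b then η a else 0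

/-- Antisymmetrization over two index slots. -/
def asym2 {n : ℕ} (T : Fin n → Fin n → ℝ) (a b : Fin n) : ℝ := (T a b - T b a) / 2

/-- Antisymmetrization over three index slots. -/
def asym3 {n : ℕ} (T : Fin n → Fin n → Fin n → ℝ) (a b c : Fin n) : ℝ :=
  (T a b c - T a c b - T b a c + T b c a + T c a b - T c b a) / 6

/-- Simultaneous antisymmetrization over a pair of upper slots and a pair of lower slots. -/
def asym22 {n : ℕ} (T : Fin n → Fin n → Fin n → Fin n → ℝ) (a b c d : Fin n) : ℝ :=
  (T a b c d - T b a c d - T a b d c + T b a d c) / 4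

/-- Simultaneous antisymmetrization over a triple of upper slots and a triple of lower
slots (arguments ordered as `T upper₁ upper₂ upper₃ lower₁ lower₂ lower₃`). -/
def asym33 {n : ℕ} (T : Fin n → Fin n → Fin n → Fin n → Fin n → Fin n → ℝ)
    (a b f c d e : Fin n) : ℝ :=
  asym3 (fun a b f => asym3 (fun c d e => T a b f c d e) c d e) a b f

/-- A Weyl candidate: a 4-tensor field with the index symmetries (3a)–(3d):
antisymmetry in the first and in the second index pair, symmetry under interchange of the
two pairs, vanishing cyclic sum `W_{a[bcd]} = 0`, and vanishing trace `W^a{}_{bad} = 0`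
(the trace being taken with the metric `η`). -/
def WeylCandidate {n : ℕ} (η : Fin n → ℝ)
    (W : (Fin n → ℝ) → Fin n → Fin n → Fin n → Fin n → ℝ) : Prop :=
  (∀ x a b c d, W x a b c d = - W x b a c d) ∧
  (∀ x a b c d, W x a b c d = - W x a b d c) ∧
  (∀ x a b c d, W x a b c d = W x c d a b) ∧
  (∀ x a b c d, asym3 (fun b c d => W x a b c d) b c d = 0) ∧
  (∀ x b d, ∑ a, η a * W x a b a d = 0)

/-- The right-hand side of the Lanczos potential equation (4), in the equivalent fully
lowered form (the free indices `a b`, raised in the paper, are lowered with the invertible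
diagonal metric `η`, which only multiplies each component equation by `η a * η b ≠ 0`).
Each contracted (dummy) index pair carries a factor `η i` coming from the inverse
metric. -/
def rhs4 {n : ℕ} (η : Fin n → ℝ) (L : (Fin n → ℝ) → Fin n → Fin n → Fin n → ℝ)
    (x : Fin n → ℝ) (a b c d : Fin n) : ℝ :=
  -- 2 L^{ab}{}_{[c;d]}
  (pd d (L · a b c) x - pd c (L · a b d) x)
  -- + 2 L_{cd}{}^{[a;b]}
  + (pd b (L · c d a) x - pd a (L · c d b) x)
  -- − (4/(n−2)) δ^{[a}_{[c} ( L^{b]i}{}_{d];i} − L^{b]i}{}_{|i|;d]} + L_{d]i}{}^{b];i} − L_{d]i}{}^{|i|;b]} )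
  - (4 / ((n : ℝ) - 2)) *
      asym22 (fun a b c d =>
        gm η a c *
          ∑ i, η i *
            (pd i (L · b i d) x - pd d (L · b i i) x
              + pd i (L · d i b) x - pd b (L · d i i) x)) a b c d
  -- + (8/((n−2)(n−1))) δ^{a}_{[c} δ^{b}_{d]} L^{ij}{}_{i;j}
  + (8 / (((n : ℝ) - 2) * ((n : ℝ) - 1))) *
      ((gm η a c * gm η b d - gm η a d * gm η b c) / 2) *
      ∑ i, ∑ j, η i * η j * pd j (L · i j i) x

/-- Equation (4): `L` is a Lanczos potential for `W` (fully lowered, equivalent form). -/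
def Eq4 {n : ℕ} (η : Fin n → ℝ)
    (W : (Fin n → ℝ) → Fin n → Fin n → Fin n → Fin n → ℝ)
    (L : (Fin n → ℝ) → Fin n → Fin n → Fin n → ℝ) : Prop :=
  ∀ x a b c d, W x a b c d = rhs4 η L x a b c d

/-- The right-hand side of equation (5) (equation (4) in the Lanczos algebraic gauge
`L_{ab}{}^b = 0`), fully lowered form:
`2 L^{ab}{}_{[c;d]} + 2 L_{cd}{}^{[a;b]} − (4/(n−2)) δ^{[a}_{[c} ( L^{b]i}{}_{d];i} + L_{d]i}{}^{b];i} )`. -/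
def rhs5 {n : ℕ} (η : Fin n → ℝ) (L : (Fin n → ℝ) → Fin n → Fin n → Fin n → ℝ)
    (x : Fin n → ℝ) (a b c d : Fin n) : ℝ :=
  (pd d (L · a b c) x - pd c (L · a b d) x)
  + (pd b (L · c d a) x - pd a (L · c d b) x)
  - (4 / ((n : ℝ) - 2)) *
      asym22 (fun a b c d =>
        gm η a c * ∑ i, η i * (pd i (L · b i d) x + pd i (L · d i b) x)) a b c d

/-- Equation (5). -/
def Eq5 {n : ℕ} (η : Fin n → ℝ)
    (W : (Fin n → ℝ) → Fin n → Fin n → Fin n → Fin n → ℝ)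
    (L : (Fin n → ℝ) → Fin n → Fin n → Fin n → ℝ) : Prop :=
  ∀ x a b c d, W x a b c d = rhs5 η L x a b c d

/-- Constraint (8), fully lowered form:
`W^{[ab}{}_{[cd;e]}{}^{f]} = (1/(n−4)) δ^{[a}_{[c} W^{bf]}{}_{de];i}{}^{i}
 + (2/(n−4)) δ^{[a}_{[c} W^{|i|b}{}_{de];i}{}^{f]} + (2/(n−4)) δ^{[a}_{[c} W^{bf]}{}_{|i|d;e]}{}^{i}
 + (4/((n−3)(n−4))) δ^{[a}_{[c} δ^{b}_{d} W^{f]i}{}_{e]j;i}{}^{j}`. -/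
def Constraint8 {n : ℕ} (η : Fin n → ℝ)
    (W : (Fin n → ℝ) → Fin n → Fin n → Fin n → Fin n → ℝ) : Prop :=
  ∀ x a b f c d e,
    asym33 (fun a b f c d e => pd f (pd e (W · a b c d)) x) a b f c d e =
      (1 / ((n : ℝ) - 4)) *
          asym33 (fun a b f c d e =>
            gm η a c * ∑ i, η i * pd i (pd i (W · b f d e)) x) a b f c d e
      + (2 / ((n : ℝ) - 4)) *
          asym33 (fun a b f c d e =>
            gm η a c * ∑ i, η i * pd f (pd i (W · i b d e)) x) a b f c d e
      + (2 / ((n : ℝ) - 4)) *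
          asym33 (fun a b f c d e =>
            gm η a c * ∑ i, η i * pd i (pd e (W · b f i d)) x) a b f c d e
      + (4 / (((n : ℝ) - 3) * ((n : ℝ) - 4))) *
          asym33 (fun a b f c d e =>
            gm η a c * gm η b d *
              ∑ i, ∑ j, η i * η j * pd j (pd i (W · f i e j)) x) a b f c d e

/-- Constraint (10), fully lowered form:
`W^{[ab}{}_{cd;i}{}^{|i|e]} + 2 W^{[ab}{}_{i[c;d]}{}^{|i|e]}
 + (4/(n−3)) δ^{[a}_{[c} W^{b|i}{}_{d]j;i}{}^{j|e]} = 0`,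
antisymmetrized over the upper indices `a b e` and (where indicated) the lower indices
`c d`. -/
def Constraint10 {n : ℕ} (η : Fin n → ℝ)
    (W : (Fin n → ℝ) → Fin n → Fin n → Fin n → Fin n → ℝ) : Prop :=
  ∀ x a b e c d,
    asym3 (fun a b e =>
      (∑ i, η i * pd e (pd i (pd i (W · a b c d))) x)
      + 2 * asym2 (fun c d =>
            ∑ i, η i * pd e (pd i (pd d (W · a b i c))) x) c d
      + (4 / ((n : ℝ) - 3)) * asym2 (fun c d =>
            gm η a c *
              ∑ i, ∑ j, η i * η j * pd e (pd j (pd i (W · b i d j))) x) c d) a b e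
    = 0

/-- `pairA p q a b` equals `1` if `(a,b) = (p,q)`, `-1` if `(a,b) = (q,p)` and `0`
otherwise: the components of the antisymmetric "unit bivector" on the index pair
`{p,q}`. -/
def pairA {n : ℕ} (p q a b : Fin n) : ℝ :=
  if a = p ∧ b = q then 1 else if a = q ∧ b = p then -1 else 0

/-- The explicit five-dimensional counterexample (coordinates and indices `1,…,5` of the
paper are `0,…,4` here): the only nonvanishing components are determined from
`W_{1234} = W_{1324} = sin x₅` by the symmetries
`W_{abcd} = −W_{bacd} = −W_{abdc} = W_{cdab}`. -/
def W5 (x : Fin 5 → ℝ) (a b c d : Fin 5) : ℝ :=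
  Real.sin (x 4) *
    (pairA 0 1 a b * pairA 2 3 c d + pairA 2 3 a b * pairA 0 1 c d
      + pairA 0 2 a b * pairA 1 3 c d + pairA 1 3 a b * pairA 0 2 c d)

/-- The Euclidean metric on `ℝ⁵`. -/
def η5 : Fin 5 → ℝ := fun _ => 1

/-- The `(a,b;c,d;e)` component of the left-hand side of constraint (10) for `n = 5`
(coefficient `4/(n−3) = 2`), for the tensor field `W5`. -/
def lhs10 (x : Fin 5 → ℝ) (a b e c d : Fin 5) : ℝ :=
  asym3 (fun a b e =>
    (∑ i, η5 i * pd e (pd i (pd i (W5 · a b c d))) x)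
    + 2 * asym2 (fun c d =>
          ∑ i, η5 i * pd e (pd i (pd d (W5 · a b i c))) x) c d
    + 2 * asym2 (fun c d =>
          gm η5 a c *
            ∑ i, ∑ j, η5 i * η5 j * pd e (pd j (pd i (W5 · b i d j))) x) c d) a b e

/-!
Each component of `W5` is `sin x₅` times a constant, so the tensor symmetries reduce to finitely
many identities for an integer coefficient tensor, checked by evaluation, and only the derivative
`∂₅` acts nontrivially. In the `(1,2;3,4;5)` component of (10) the second term carries a
derivative `;3` or `;4` and the third a factor `δ^a_c` with `a ∈ {1,2,5}`, `c ∈ {3,4}`, so both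
vanish; of the first term only `∂₅³ W_{1234} = -∂₅³ W_{2134} = -cos x₅` survives the
antisymmetrization, which gives `2 (-cos x₅) / 6 = -cos(x₅) / 3`.
-/

section PartialDerivatives

variable {n : ℕ}

theorem pd_const_zero (i : Fin n) : pd i (fun _ : Fin n → ℝ => (0 : ℝ)) = fun _ => 0 := by
  funext x
  simp [pd]

theorem pd_comp_apply {g g' : ℝ → ℝ} (hg : ∀ t, HasDerivAt g (g' t) t) (i k : Fin n) :
    pd i (fun x => g (x k)) = if i = k then fun x => g' (x k) else fun _ => 0 := by
  funext x
  have h : HasFDerivAt (fun x : Fin n → ℝ => g (x k))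
      (g' (x k) • ContinuousLinearMap.proj k) x :=
    (hg (x k)).comp_hasFDerivAt x (hasFDerivAt_apply (𝕜 := ℝ) k x)
  rw [pd, h.fderiv]
  split_ifs with h <;> simp [h, eq_comm]

theorem pd_pd_pd_comp_apply {g g' g'' g''' : ℝ → ℝ} (hg : ∀ t, HasDerivAt g (g' t) t)
    (hg' : ∀ t, HasDerivAt g' (g'' t) t) (hg'' : ∀ t, HasDerivAt g'' (g''' t) t)
    (e j i k : Fin n) :
    pd e (pd j (pd i (fun x => g (x k)))) =
      if i = k ∧ j = k ∧ e = k then fun x => g''' (x k) else fun _ => 0 := by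
  rw [pd_comp_apply hg]
  by_cases hi : i = k
  · rw [if_pos hi, pd_comp_apply hg']
    by_cases hj : j = k
    · rw [if_pos hj, pd_comp_apply hg'']
      simp [hi, hj]
    · simp [hj, pd_const_zero]
  · simp [hi, pd_const_zero]

end PartialDerivatives

theorem WeylCandidate.mul_left {n : ℕ} {η : Fin n → ℝ}
    {W : (Fin n → ℝ) → Fin n → Fin n → Fin n → Fin n → ℝ} (hW : WeylCandidate η W)
    (f : (Fin n → ℝ) → ℝ) : WeylCandidate η (fun x a b c d => f x * W x a b c d) := by
  obtain ⟨hab, hcd, hpair, hcyc, htr⟩ := hW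
  refine ⟨fun x a b c d => ?_, fun x a b c d => ?_, fun x a b c d => ?_,
    fun x a b c d => ?_, fun x b d => ?_⟩ <;> dsimp only
  · rw [hab x a b c d]; ring
  · rw [hcd x a b c d]; ring
  · rw [hpair x a b c d]
  · have := hcyc x a b c d
    simp only [asym3] at this ⊢
    linear_combination f x * this
  · simp_rw [mul_left_comm _ (f x), ← Finset.mul_sum, htr, mul_zero]

-- Ring-generic versions of `pairA` and of the coefficients of `W5`, so that the symmetries
-- can be decided over `ℤ` and then cast to `ℝ`.
def bivector (R : Type*) [Ring R] {n : ℕ} (p q a b : Fin n) : R :=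
  if a = p ∧ b = q then 1 else if a = q ∧ b = p then -1 else 0

@[simp]
theorem Int.cast_bivector {R : Type*} [Ring R] {n : ℕ} (p q a b : Fin n) :
    ((bivector ℤ p q a b : ℤ) : R) = bivector R p q a b := by
  unfold bivector
  split_ifs <;> simp

def w5Coeff (R : Type*) [Ring R] (a b c d : Fin 5) : R :=
  bivector R 0 1 a b * bivector R 2 3 c d + bivector R 2 3 a b * bivector R 0 1 c d
    + bivector R 0 2 a b * bivector R 1 3 c d + bivector R 1 3 a b * bivector R 0 2 c d

@[simp]
theorem Int.cast_w5Coeff {R : Type*} [Ring R] (a b c d : Fin 5) :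
    ((w5Coeff ℤ a b c d : ℤ) : R) = w5Coeff R a b c d := by
  simp [w5Coeff]

theorem W5_eq : W5 = fun x a b c d => Real.sin (x 4) * w5Coeff ℝ a b c d := rfl

theorem weylCandidate_w5Coeff : WeylCandidate η5 (fun _ => w5Coeff ℝ) := by
  have hZ : (∀ a b c d : Fin 5, w5Coeff ℤ a b c d = -w5Coeff ℤ b a c d) ∧
      (∀ a b c d : Fin 5, w5Coeff ℤ a b c d = -w5Coeff ℤ a b d c) ∧
      (∀ a b c d : Fin 5, w5Coeff ℤ a b c d = w5Coeff ℤ c d a b) ∧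
      (∀ a b c d : Fin 5, w5Coeff ℤ a b c d - w5Coeff ℤ a b d c - w5Coeff ℤ a c b d
        + w5Coeff ℤ a c d b + w5Coeff ℤ a d b c - w5Coeff ℤ a d c b = 0) ∧
      (∀ b d : Fin 5, ∑ a, w5Coeff ℤ a b a d = 0) := by
    decide
  obtain ⟨hab, hcd, hpair, hcyc, htr⟩ := hZ
  refine ⟨fun _ a b c d => ?_, fun _ a b c d => ?_, fun _ a b c d => ?_,
    fun _ a b c d => ?_, fun _ b d => ?_⟩
  · simpa using congrArg (Int.cast : ℤ → ℝ) (hab a b c d)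
  · simpa using congrArg (Int.cast : ℤ → ℝ) (hcd a b c d)
  · simpa using congrArg (Int.cast : ℤ → ℝ) (hpair a b c d)
  · simpa [asym3] using congrArg (fun z : ℤ => (z : ℝ) / 6) (hcyc a b c d)
  · simpa [η5] using congrArg (Int.cast : ℤ → ℝ) (htr b d)

theorem weylCandidate_W5 : WeylCandidate η5 W5 := by
  rw [W5_eq]
  exact weylCandidate_w5Coeff.mul_left fun x => Real.sin (x 4)

theorem pd_pd_pd_W5 (e j i a b c d : Fin 5) (x : Fin 5 → ℝ) :
    pd e (pd j (pd i (W5 · a b c d))) x =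
      if i = 4 ∧ j = 4 ∧ e = 4 then -Real.cos (x 4) * w5Coeff ℝ a b c d else 0 := by
  set K := w5Coeff ℝ a b c d
  rw [W5_eq, pd_pd_pd_comp_apply (fun t => (Real.hasDerivAt_sin t).mul_const K)
    (fun t => (Real.hasDerivAt_cos t).mul_const K)
    (fun t => (Real.hasDerivAt_sin t).neg.mul_const K)]
  split_ifs <;> simp

theorem lhs10_W5 (x : Fin 5 → ℝ) : lhs10 x 0 1 4 2 3 = -1 / 3 * Real.cos (x 4) := by
  simp only [lhs10, asym3, asym2, η5, gm, one_mul, pd_pd_pd_W5, Fin.sum_univ_five]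
  simp only [Fin.reduceEq, and_false, false_and, and_self, if_false, if_true, mul_zero,
    zero_mul, add_zero]
  have h0123 : w5Coeff ℝ 0 1 2 3 = 1 := by simp [w5Coeff, bivector, Fin.ext_iff]
  have h1023 : w5Coeff ℝ 1 0 2 3 = -1 := by simp [w5Coeff, bivector, Fin.ext_iff]
  rw [h0123, h1023]
  ring

/-- **Explicit five-dimensional counterexample.**  On Euclidean `ℝ⁵` the tensor field `W5`
is a Weyl candidate, but the `(a,b;c,d;e) = (1,2;3,4;5)` component of the left-hand side
of constraint (10) is a nonzero constant multiple of `cos x₅`, hence not identically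
zero; so `W5` fails constraint (10). -/
theorem five_dimensional_counterexample :
    WeylCandidate η5 W5 ∧
    (∃ c : ℝ, c ≠ 0 ∧ ∀ x, lhs10 x 0 1 4 2 3 = c * Real.cos (x 4)) ∧
    (∃ x, lhs10 x 0 1 4 2 3 ≠ 0) := by
  refine ⟨weylCandidate_W5, ⟨-1 / 3, by norm_num, lhs10_W5⟩, ⟨0, ?_⟩⟩
  rw [lhs10_W5]
  norm_num
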